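/- arXiv:2408.16860 — 2 statements merged into one kernel-verified Lean document; each statement's English description precedes it below -/
import Mathlib

section
/- For all a, b ∈ {0, ±1, ±2} with a ≠ b, the smallest eigenvalue of the symmetric matrix [[0,2,a],[2,0,b],[a,b,0]] is at most -√5. -/
/-!
The characteristic polynomial of `!![0, c, a; c, 0, b; a, b, 0]` is the monic cubic
`p t = t ^ 3 - (c ^ 2 + a ^ 2 + b ^ 2) * t - 2 * a * b * c`, which tends to `-∞` at `-∞`; so by the
intermediate value theorem it has a root `≤ -√5` as soon as `p (-√5) ≥ 0`. For `c = 2` this reads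
`4 * a * b ≤ √5 * (a ^ 2 + b ^ 2 - 1)`, which holds for distinct integers `a`, `b`:
then `a ^ 2 + b ^ 2 - 1 ≥ 2 * a * b` and `a ^ 2 + b ^ 2 ≥ 1`.
-/

theorem mem_spectrum_hollow_fin_three_iff {K : Type*} [Field K] (a b c μ : K) :
    μ ∈ spectrum K !![0, c, a; c, 0, b; a, b, 0] ↔
      μ ^ 3 - (c ^ 2 + a ^ 2 + b ^ 2) * μ - 2 * a * b * c = 0 := by
  rw [spectrum.mem_iff, Matrix.isUnit_iff_isUnit_det, isUnit_iff_ne_zero, not_not,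
    Matrix.algebraMap_eq_diagonal, Matrix.det_fin_three]
  simp only [Fin.isValue, Matrix.sub_apply, Matrix.diagonal_apply_eq, Matrix.diagonal_apply_ne,
    Matrix.of_apply, Matrix.cons_val', Matrix.cons_val_zero, Matrix.cons_val_one, Matrix.cons_val,
    Matrix.cons_val_fin_one, Pi.algebraMap_apply, Algebra.algebraMap_self, RingHom.id_apply, ne_eq,
    Fin.reduceEq, not_false_eq_true]
  constructor <;> intro h <;> linear_combination h

theorem exists_cubic_root_le_of_nonneg {s r x : ℝ} (hx : 0 ≤ x ^ 3 - s * x - r) :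
    ∃ μ ≤ x, μ ^ 3 - s * μ - r = 0 := by
  set u := max (-x) (1 + |s| + |r|)
  have hu : 1 + |s| + |r| ≤ u := le_max_right _ _
  have hu1 : 1 ≤ u := by linarith [abs_nonneg s, abs_nonneg r]
  have hneg : (-u) ^ 3 - s * (-u) - r ≤ 0 :=
    calc (-u) ^ 3 - s * (-u) - r ≤ -u ^ 3 + |s| * u + |r| * u := by
          nlinarith [le_abs_self s, neg_abs_le r, abs_nonneg r]
      _ ≤ -u ^ 3 + (u - 1) * u := by nlinarith
      _ ≤ 0 := by nlinarith [mul_nonneg (by linarith : (0 : ℝ) ≤ u) (sq_nonneg (u - 1))]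
  obtain ⟨μ, hμ, hroot⟩ := intermediate_value_Icc (neg_le.mp (le_max_left _ _))
    (by fun_prop : ContinuousOn (fun t : ℝ => t ^ 3 - s * t - r) (Set.Icc (-u) x)) ⟨hneg, hx⟩
  exact ⟨μ, hμ.2, hroot⟩

theorem four_mul_le_sqrt_five_mul {a b : ℝ} (hab : 1 ≤ (a - b) ^ 2) (hsq : 1 ≤ a ^ 2 + b ^ 2) :
    4 * (a * b) ≤ √5 * (a ^ 2 + b ^ 2 - 1) := by
  have h5 : (2 : ℝ) ≤ √5 := (Real.le_sqrt (by norm_num) (by norm_num)).mpr (by norm_num)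
  rcases le_or_gt 0 (a * b) with hab0 | hab0
  · nlinarith
  · nlinarith

theorem stmt1 (a b : ℝ) (ha : a ∈ ({0, 1, -1, 2, -2} : Set ℝ))
    (hb : b ∈ ({0, 1, -1, 2, -2} : Set ℝ)) (hab : a ≠ b) :
    ∃ μ ∈ spectrum ℝ (!![0, 2, a; 2, 0, b; a, b, 0]), μ ≤ -Real.sqrt 5 := by
  have hgap : 1 ≤ (a - b) ^ 2 ∧ 1 ≤ a ^ 2 + b ^ 2 := by
    simp only [Set.mem_insert_iff, Set.mem_singleton_iff] at ha hb
    rcases ha with rfl | rfl | rfl | rfl | rfl <;> rcases hb with rfl | rfl | rfl | rfl | rfl <;>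
      first | exact absurd rfl hab | norm_num
  have hpos : 0 ≤ (-√5) ^ 3 - (2 ^ 2 + a ^ 2 + b ^ 2) * (-√5) - 2 * a * b * 2 := by
    have h5 : √5 ^ 2 = 5 := Real.sq_sqrt (by norm_num)
    have hval : (-√5) ^ 3 - (2 ^ 2 + a ^ 2 + b ^ 2) * (-√5) - 2 * a * b * 2 =
        √5 * (a ^ 2 + b ^ 2 - 1) - 4 * (a * b) := by
      linear_combination (-√5) * h5
    linarith [four_mul_le_sqrt_five_mul hgap.1 hgap.2]
  obtain ⟨μ, hμ, hroot⟩ := exists_cubic_root_le_of_nonneg hpos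
  exact ⟨μ, (mem_spectrum_hollow_fin_three_iff a b 2 μ).mpr hroot, hμ⟩
end

section
/- Let F be a signed graph on vertex set V with signed adjacency matrix A_F, let a : V → ℕ⁺, and let A_{F,a} be the blow-up matrix indexed by pairs (u,i) with u ∈ V and 1 ≤ i ≤ a(u), defined by A_{F,a}((u,i),(v,j)) = 0 if (u,i)=(v,j), = 2 if u = v and i ≠ j, and = A_F(u,v) if u ≠ v. If A_F + 2I is positive semidefinite, then A_{F,a} + 2I is positive semidefinite. -/
/-- The blow-up matrix `A_{F,a}` of a signed adjacency matrix `AF`. -/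
def blowup {V : Type*} [DecidableEq V] (AF : Matrix V V ℝ) (a : V → ℕ) :
    Matrix (Σ v : V, Fin (a v)) (Σ v : V, Fin (a v)) ℝ :=
  fun p q => if p = q then 0 else if p.1 = q.1 then 2 else AF p.1 q.1

/-! Since `AF` has zero diagonal, `A_{F,a} + 2I` is the submatrix of `AF + 2I` along the
projection `(u, i) ↦ u`, i.e. `Bᵀ (AF + 2I) B`, and positive semidefiniteness passes to
such submatrices. -/

theorem blowup_add_two_smul_one_eq_submatrix {V : Type*} [DecidableEq V]
    {AF : Matrix V V ℝ} (hholl : ∀ v, AF v v = 0) (a : V → ℕ) :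
    blowup AF a + (2 : ℝ) • 1 = (AF + (2 : ℝ) • 1).submatrix Sigma.fst Sigma.fst := by
  ext p q
  simp only [blowup, Matrix.add_apply, Matrix.smul_apply, Matrix.one_apply,
    Matrix.submatrix_apply, smul_eq_mul]
  by_cases hpq : p = q
  · subst hpq
    simp [hholl]
  · by_cases hfst : p.1 = q.1
    · simp [hpq, hfst, hholl]
    · simp [hpq, hfst]

theorem stmt7_general {V : Type*} [Fintype V] [DecidableEq V]
    (AF : Matrix V V ℝ) (hholl : ∀ v, AF v v = 0)
    (a : V → ℕ)
    (hpsd : (AF + (2 : ℝ) • 1).PosSemidef) :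
    (blowup AF a + (2 : ℝ) • 1).PosSemidef := by
  rw [blowup_add_two_smul_one_eq_submatrix hholl a]
  exact hpsd.submatrix Sigma.fst

theorem stmt7 {V : Type*} [Fintype V] [DecidableEq V]
    (AF : Matrix V V ℝ) (hsym : AF.IsSymm) (hholl : ∀ v, AF v v = 0)
    (hsign : ∀ u v, AF u v = 0 ∨ AF u v = 1 ∨ AF u v = -1)
    (a : V → ℕ) (ha : ∀ v, 1 ≤ a v)
    (hpsd : (AF + (2 : ℝ) • 1).PosSemidef) :
    (blowup AF a + (2 : ℝ) • 1).PosSemidef :=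
  stmt7_general AF hholl a hpsd
end
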